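/- Let $L_1, L_2 > 0$ and let $k_1, k_2$ be nonzero real numbers of opposite signs (i.e. $k_1 k_2 < 0$). Then for all continuous functions $f_1 : [0,L_1] \to \mathbb{R}$ and $f_2 : [0,L_2] \to \mathbb{R}$ there exists a unique pair of twice continuously differentiable functions $\psi_1 : [0,L_1] \to \mathbb{R}$ and $\psi_2 : [0,L_2] \to \mathbb{R}$ satisfying: $-k_1 \psi_1'' = f_1$ on $[0,L_1]$; $-k_2 \psi_2'' = f_2$ on $[0,L_2]$; the external Dirichlet condition $\psi_2(0) = 0$; the continuity conditions $\psi_1(0) = \psi_1(L_1) = \psi_2(L_2)$; and the Kirchhoff condition $k_1 \psi_1'(L_1) - k_1 \psi_1'(0) + k_2 \psi_2'(L_2) = 0$. -/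

import Mathlib

/-!
On each edge a classical solution is a second primitive of `-f / k` plus an affine function.
On the loop, the periodicity condition `ψ₁ 0 = ψ₁ L₁` fixes the slope; the jump of the flux
across the loop, `k₁ (ψ₁' L₁ - ψ₁' 0)`, does not depend on the affine part, so the Kirchhoff
condition fixes the slope of the tail; the Dirichlet and continuity conditions fix the constants.
For uniqueness, the difference of two solutions solves the problem with zero sources, hence is
affine on each edge, and the same four conditions force all its coefficients to vanish.
-/

/-- Classical solution of the two-phase tadpole network problem: the loop edge `e₁` of
length `L₁` (both endpoints at the internal vertex) with conductivity `k₁`, the tail edge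
`e₂` of length `L₂` with conductivity `k₂`, Dirichlet condition at the external vertex
`x = 0` of the tail, continuity and Kirchhoff conditions at the internal vertex. -/
def IsTadpoleSolution (L₁ L₂ k₁ k₂ : ℝ) (f₁ f₂ : ℝ → ℝ) (ψ₁ ψ₂ : ℝ → ℝ) : Prop :=
  ContDiffOn ℝ 2 ψ₁ (Set.Icc 0 L₁) ∧ ContDiffOn ℝ 2 ψ₂ (Set.Icc 0 L₂) ∧
  (∀ x ∈ Set.Icc (0 : ℝ) L₁, -(k₁ * iteratedDerivWithin 2 ψ₁ (Set.Icc 0 L₁) x) = f₁ x) ∧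
  (∀ x ∈ Set.Icc (0 : ℝ) L₂, -(k₂ * iteratedDerivWithin 2 ψ₂ (Set.Icc 0 L₂) x) = f₂ x) ∧
  ψ₂ 0 = 0 ∧
  ψ₁ 0 = ψ₁ L₁ ∧ ψ₁ L₁ = ψ₂ L₂ ∧
  k₁ * derivWithin ψ₁ (Set.Icc 0 L₁) L₁ - k₁ * derivWithin ψ₁ (Set.Icc 0 L₁) 0
    + k₂ * derivWithin ψ₂ (Set.Icc 0 L₂) L₂ = 0

open Set

theorem ContDiff.exists_contDiff_succ_deriv_eq {n : ℕ} {g : ℝ → ℝ} (hg : ContDiff ℝ n g) :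
    ∃ G : ℝ → ℝ, ContDiff ℝ (n + 1) G ∧ deriv G = g := by
  have hG : deriv (fun x => ∫ t in (0 : ℝ)..x, g t) = g :=
    funext (hg.continuous.deriv_integral g 0)
  refine ⟨fun x => ∫ t in (0 : ℝ)..x, g t, contDiff_succ_iff_deriv.2 ⟨?_, by simp, ?_⟩, hG⟩
  · exact fun x => (hg.continuous.integral_hasStrictDerivAt 0 x).hasDerivAt.differentiableAt
  · rwa [hG]

theorem Continuous.exists_contDiff_two_iteratedDeriv_eq {g : ℝ → ℝ} (hg : Continuous g) :
    ∃ G : ℝ → ℝ, ContDiff ℝ 2 G ∧ iteratedDeriv 2 G = g := by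
  obtain ⟨F, hF, rfl⟩ :=
    (contDiff_zero.2 hg : ContDiff ℝ (0 : ℕ) g).exists_contDiff_succ_deriv_eq
  obtain ⟨G, hG, rfl⟩ := (hF : ContDiff ℝ (1 : ℕ) F).exists_contDiff_succ_deriv_eq
  exact ⟨G, hG, by rw [iteratedDeriv_succ, iteratedDeriv_one]⟩

theorem ContinuousOn.exists_contDiff_two_iteratedDeriv_eqOn {a b : ℝ} {g : ℝ → ℝ} (hab : a ≤ b)
    (hg : ContinuousOn g (Icc a b)) :
    ∃ G : ℝ → ℝ, ContDiff ℝ 2 G ∧ EqOn (iteratedDeriv 2 G) g (Icc a b) := by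
  obtain ⟨G, hG, hG''⟩ :=
    (hg.domRestrict.Icc_extend' (h := hab)).exists_contDiff_two_iteratedDeriv_eq
  exact ⟨G, hG, fun x hx => by rw [hG'', IccExtend_of_mem hab _ hx, domRestrict_apply]⟩

theorem deriv_add_affine {P : ℝ → ℝ} {x : ℝ} (hP : DifferentiableAt ℝ P x) (a b : ℝ) :
    deriv (fun y => P y + (a * y + b)) x = deriv P x + a := by
  have : HasDerivAt (fun y => a * y + b) a x := by
    simpa using ((hasDerivAt_id x).const_mul a).add_const b
  exact (hP.hasDerivAt.add this).deriv

theorem iteratedDeriv_two_add_affine {P : ℝ → ℝ} (hP : Differentiable ℝ P) (a b : ℝ) :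
    iteratedDeriv 2 (fun y => P y + (a * y + b)) = iteratedDeriv 2 P := by
  have h : deriv (fun y => P y + (a * y + b)) = fun y => deriv P y + a :=
    funext fun y => deriv_add_affine (hP y) a b
  rw [iteratedDeriv_succ, iteratedDeriv_one, h, iteratedDeriv_succ, iteratedDeriv_one]
  exact funext fun y => deriv_add_const a

section AffineOfSecondDerivZero

variable {a b : ℝ} {d : ℝ → ℝ}

theorem derivWithin_eq_of_iteratedDerivWithin_two_eq_zero (hab : a < b)
    (hd : ContDiffOn ℝ 2 d (Icc a b))
    (h : ∀ x ∈ Icc a b, iteratedDerivWithin 2 d (Icc a b) x = 0) :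
    ∀ x ∈ Icc a b, derivWithin d (Icc a b) x = derivWithin d (Icc a b) a := by
  have hd' : DifferentiableOn ℝ (derivWithin d (Icc a b)) (Icc a b) :=
    (hd.derivWithin (uniqueDiffOn_Icc hab) (by norm_num)).differentiableOn one_ne_zero
  refine constant_of_derivWithin_zero hd' fun x hx => ?_
  rw [← h x (Ico_subset_Icc_self hx), iteratedDerivWithin_succ, iteratedDerivWithin_one]

theorem eqOn_affine_of_iteratedDerivWithin_two_eq_zero (hab : a < b)
    (hd : ContDiffOn ℝ 2 d (Icc a b))
    (h : ∀ x ∈ Icc a b, iteratedDerivWithin 2 d (Icc a b) x = 0) :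
    ∀ x ∈ Icc a b, d x = d a + derivWithin d (Icc a b) a * (x - a) := by
  set c := derivWithin d (Icc a b) a
  have hline : ∀ x, HasDerivAt (fun y => d a + c * (y - a)) c x := fun x => by
    simpa using (((hasDerivAt_id x).sub_const a).const_mul c).const_add (d a)
  refine eq_of_derivWithin_eq (hd.differentiableOn two_ne_zero)
    (fun x _ => (hline x).differentiableAt.differentiableWithinAt) (fun x hx => ?_) (by simp)
  have hx' := Ico_subset_Icc_self hx
  rw [derivWithin_eq_of_iteratedDerivWithin_two_eq_zero hab hd h x hx',
    (hline x).hasDerivWithinAt.derivWithin (uniqueDiffOn_Icc hab x hx')]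

end AffineOfSecondDerivZero

namespace IsTadpoleSolution

variable {L₁ L₂ k₁ k₂ : ℝ} {f₁ f₂ g₁ g₂ φ₁ φ₂ ψ₁ ψ₂ : ℝ → ℝ}

theorem of_contDiff (hL₁ : 0 < L₁) (hL₂ : 0 < L₂) (hψ₁ : ContDiff ℝ 2 ψ₁)
    (hψ₂ : ContDiff ℝ 2 ψ₂)
    (heq₁ : ∀ x ∈ Icc 0 L₁, -(k₁ * iteratedDeriv 2 ψ₁ x) = f₁ x)
    (heq₂ : ∀ x ∈ Icc 0 L₂, -(k₂ * iteratedDeriv 2 ψ₂ x) = f₂ x)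
    (hdir : ψ₂ 0 = 0) (hloop : ψ₁ 0 = ψ₁ L₁) (hcont : ψ₁ L₁ = ψ₂ L₂)
    (hkir : k₁ * deriv ψ₁ L₁ - k₁ * deriv ψ₁ 0 + k₂ * deriv ψ₂ L₂ = 0) :
    IsTadpoleSolution L₁ L₂ k₁ k₂ f₁ f₂ ψ₁ ψ₂ := by
  have hderiv : ∀ {L : ℝ} {ψ : ℝ → ℝ}, 0 < L → ContDiff ℝ 2 ψ →
      ∀ x ∈ Icc 0 L, derivWithin ψ (Icc 0 L) x = deriv ψ x := fun hL hψ x hx =>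
    (hψ.differentiable two_ne_zero x).derivWithin (uniqueDiffOn_Icc hL x hx)
  have hiter : ∀ {L : ℝ} {ψ : ℝ → ℝ}, 0 < L → ContDiff ℝ 2 ψ →
      ∀ x ∈ Icc 0 L, iteratedDerivWithin 2 ψ (Icc 0 L) x = iteratedDeriv 2 ψ x :=
    fun hL hψ x hx => iteratedDerivWithin_eq_iteratedDeriv (uniqueDiffOn_Icc hL) hψ.contDiffAt hx
  refine ⟨hψ₁.contDiffOn, hψ₂.contDiffOn, fun x hx => ?_, fun x hx => ?_, hdir, hloop, hcont, ?_⟩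
  · rw [hiter hL₁ hψ₁ x hx, heq₁ x hx]
  · rw [hiter hL₂ hψ₂ x hx, heq₂ x hx]
  · rwa [hderiv hL₁ hψ₁ L₁ (right_mem_Icc.2 hL₁.le), hderiv hL₁ hψ₁ 0 (left_mem_Icc.2 hL₁.le),
      hderiv hL₂ hψ₂ L₂ (right_mem_Icc.2 hL₂.le)]

theorem sub (hL₁ : 0 < L₁) (hL₂ : 0 < L₂) (hφ : IsTadpoleSolution L₁ L₂ k₁ k₂ f₁ f₂ φ₁ φ₂)
    (hψ : IsTadpoleSolution L₁ L₂ k₁ k₂ g₁ g₂ ψ₁ ψ₂) :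
    IsTadpoleSolution L₁ L₂ k₁ k₂ (f₁ - g₁) (f₂ - g₂) (φ₁ - ψ₁) (φ₂ - ψ₂) := by
  obtain ⟨hφ₁, hφ₂, hφeq₁, hφeq₂, hφdir, hφloop, hφcont, hφkir⟩ := hφ
  obtain ⟨hψ₁, hψ₂, hψeq₁, hψeq₂, hψdir, hψloop, hψcont, hψkir⟩ := hψ
  have hdiff : ∀ {L : ℝ} {φ ψ : ℝ → ℝ}, ContDiffOn ℝ 2 φ (Icc 0 L) → ContDiffOn ℝ 2 ψ (Icc 0 L) →
      ∀ x ∈ Icc 0 L, derivWithin (φ - ψ) (Icc 0 L) x =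
        derivWithin φ (Icc 0 L) x - derivWithin ψ (Icc 0 L) x := fun hφ hψ x hx =>
    derivWithin_sub ((hφ.differentiableOn two_ne_zero) x hx)
      ((hψ.differentiableOn two_ne_zero) x hx)
  refine ⟨hφ₁.sub hψ₁, hφ₂.sub hψ₂, fun x hx => ?_, fun x hx => ?_, ?_, ?_, ?_, ?_⟩
  · rw [iteratedDerivWithin_sub hx (uniqueDiffOn_Icc hL₁) (hφ₁ x hx) (hψ₁ x hx), Pi.sub_apply]
    linear_combination hφeq₁ x hx - hψeq₁ x hx
  · rw [iteratedDerivWithin_sub hx (uniqueDiffOn_Icc hL₂) (hφ₂ x hx) (hψ₂ x hx), Pi.sub_apply]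
    linear_combination hφeq₂ x hx - hψeq₂ x hx
  · simp [hφdir, hψdir]
  · simp [hφloop, hψloop]
  · simp [hφcont, hψcont]
  · rw [hdiff hφ₁ hψ₁ L₁ (right_mem_Icc.2 hL₁.le), hdiff hφ₁ hψ₁ 0 (left_mem_Icc.2 hL₁.le),
      hdiff hφ₂ hψ₂ L₂ (right_mem_Icc.2 hL₂.le)]
    linear_combination hφkir - hψkir

theorem eqOn_zero {d₁ d₂ : ℝ → ℝ} (hL₁ : 0 < L₁) (hL₂ : 0 < L₂) (hk₁ : k₁ ≠ 0)
    (hk₂ : k₂ ≠ 0) (hd : IsTadpoleSolution L₁ L₂ k₁ k₂ 0 0 d₁ d₂) :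
    EqOn d₁ 0 (Icc 0 L₁) ∧ EqOn d₂ 0 (Icc 0 L₂) := by
  obtain ⟨hd₁, hd₂, heq₁, heq₂, hdir, hloop, hcont, hkir⟩ := hd
  have h₁'' : ∀ x ∈ Icc 0 L₁, iteratedDerivWithin 2 d₁ (Icc 0 L₁) x = 0 := fun x hx => by
    simpa [hk₁] using heq₁ x hx
  have h₂'' : ∀ x ∈ Icc 0 L₂, iteratedDerivWithin 2 d₂ (Icc 0 L₂) x = 0 := fun x hx => by
    simpa [hk₂] using heq₂ x hx
  have hL₁mem : L₁ ∈ Icc 0 L₁ := right_mem_Icc.2 hL₁.le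
  have hL₂mem : L₂ ∈ Icc 0 L₂ := right_mem_Icc.2 hL₂.le
  have hd₁x := eqOn_affine_of_iteratedDerivWithin_two_eq_zero hL₁ hd₁ h₁''
  have hd₂x := eqOn_affine_of_iteratedDerivWithin_two_eq_zero hL₂ hd₂ h₂''
  rw [derivWithin_eq_of_iteratedDerivWithin_two_eq_zero hL₁ hd₁ h₁'' L₁ hL₁mem,
    derivWithin_eq_of_iteratedDerivWithin_two_eq_zero hL₂ hd₂ h₂'' L₂ hL₂mem] at hkir
  set c₁ := derivWithin d₁ (Icc 0 L₁) 0
  set c₂ := derivWithin d₂ (Icc 0 L₂) 0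
  have hc₁ : c₁ = 0 := by
    have := hd₁x L₁ hL₁mem
    rw [← hloop] at this
    simpa [hL₁.ne'] using this
  have hc₂ : c₂ = 0 := by simpa [hk₂] using hkir
  have hzero₂ : EqOn d₂ 0 (Icc 0 L₂) := fun x hx => by simp [hd₂x x hx, hdir, hc₂]
  have hd₁0 : d₁ 0 = 0 := by rw [hloop, hcont, hzero₂ hL₂mem, Pi.zero_apply]
  exact ⟨fun x hx => by simp [hd₁x x hx, hd₁0, hc₁], hzero₂⟩

end IsTadpoleSolution

theorem exists_isTadpoleSolution {L₁ L₂ k₁ k₂ : ℝ} {f₁ f₂ : ℝ → ℝ} (hL₁ : 0 < L₁) (hL₂ : 0 < L₂)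
    (hk₁ : k₁ ≠ 0) (hk₂ : k₂ ≠ 0) (hf₁ : ContinuousOn f₁ (Icc 0 L₁))
    (hf₂ : ContinuousOn f₂ (Icc 0 L₂)) :
    ∃ ψ₁ ψ₂ : ℝ → ℝ, IsTadpoleSolution L₁ L₂ k₁ k₂ f₁ f₂ ψ₁ ψ₂ := by
  obtain ⟨P₁, hP₁, hP₁''⟩ := (hf₁.neg.div_const k₁).exists_contDiff_two_iteratedDeriv_eqOn hL₁.le
  obtain ⟨P₂, hP₂, hP₂''⟩ := (hf₂.neg.div_const k₂).exists_contDiff_two_iteratedDeriv_eqOn hL₂.le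
  have hP₁' := hP₁.differentiable two_ne_zero
  have hP₂' := hP₂.differentiable two_ne_zero
  -- `a₁` makes the loop periodic, `a₂` enforces Kirchhoff's law, `b₁` continuity at the vertex
  set a₁ := (P₁ 0 - P₁ L₁) / L₁
  set a₂ := -(k₁ * (deriv P₁ L₁ - deriv P₁ 0)) / k₂ - deriv P₂ L₂
  set ψ₂ := fun x => P₂ x + (a₂ * x + -P₂ 0)
  set b₁ := ψ₂ L₂ - P₁ L₁ - a₁ * L₁
  refine ⟨fun x => P₁ x + (a₁ * x + b₁), ψ₂, IsTadpoleSolution.of_contDiff hL₁ hL₂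
    (hP₁.add (contDiff_id.const_smul a₁ |>.add contDiff_const))
    (hP₂.add (contDiff_id.const_smul a₂ |>.add contDiff_const)) (fun x hx => ?_) (fun x hx => ?_)
    (by simp [ψ₂]) ?_ (by simp [b₁]) ?_⟩
  · rw [iteratedDeriv_two_add_affine hP₁', hP₁'' hx]
    simp only [Pi.neg_apply]
    field_simp
  · rw [iteratedDeriv_two_add_affine hP₂', hP₂'' hx]
    simp only [Pi.neg_apply]
    field_simp
  · simp only [a₁]
    field_simp
    ring
  · simp only [ψ₂, deriv_add_affine (hP₁' _), deriv_add_affine (hP₂' _), a₂]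
    field_simp
    ring

/-- Well-posedness for a two-phase tadpole network (Theorem 4.1): for every pair of
conductivities `k₁, k₂` of opposite signs the problem is well-posed. -/
theorem stmt_9 (L₁ L₂ : ℝ) (hL₁ : 0 < L₁) (hL₂ : 0 < L₂)
    (k₁ k₂ : ℝ) (hk : k₁ * k₂ < 0)
    (f₁ f₂ : ℝ → ℝ)
    (hf₁ : ContinuousOn f₁ (Set.Icc 0 L₁)) (hf₂ : ContinuousOn f₂ (Set.Icc 0 L₂)) :
    ∃ ψ₁ ψ₂ : ℝ → ℝ, IsTadpoleSolution L₁ L₂ k₁ k₂ f₁ f₂ ψ₁ ψ₂ ∧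
      ∀ φ₁ φ₂ : ℝ → ℝ, IsTadpoleSolution L₁ L₂ k₁ k₂ f₁ f₂ φ₁ φ₂ →
        (∀ x ∈ Set.Icc (0 : ℝ) L₁, φ₁ x = ψ₁ x) ∧
        (∀ x ∈ Set.Icc (0 : ℝ) L₂, φ₂ x = ψ₂ x) := by
  have hk₁ : k₁ ≠ 0 := left_ne_zero_of_mul hk.ne
  have hk₂ : k₂ ≠ 0 := right_ne_zero_of_mul hk.ne
  obtain ⟨ψ₁, ψ₂, hψ⟩ := exists_isTadpoleSolution hL₁ hL₂ hk₁ hk₂ hf₁ hf₂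
  refine ⟨ψ₁, ψ₂, hψ, fun φ₁ φ₂ hφ => ?_⟩
  have hdiff := hφ.sub hL₁ hL₂ hψ
  rw [sub_self, sub_self] at hdiff
  obtain ⟨h₁, h₂⟩ := hdiff.eqOn_zero hL₁ hL₂ hk₁ hk₂
  exact ⟨fun x hx => sub_eq_zero.1 (h₁ hx), fun x hx => sub_eq_zero.1 (h₂ hx)⟩
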